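/- arXiv:2410.10337 — 2 statements merged into one kernel-verified Lean document; each statement's English description precedes it below -/
import Mathlib

section
/- Let G be an NB-irreducible graph with ρ(G) > Λ(G). Then there exist two non-backtracking cycles C₁ and C₂ in G with |C₁| = |C₂|, having a common directed edge, such that (∏_{e∈C₁} outdeg(e))^{1/|C₁|} < (∏_{e∈C₂} outdeg(e))^{1/|C₂|}. -/
open Finset Filter

namespace NB
set_option linter.unusedSectionVars false

variable {V : Type} [Fintype V] [DecidableEq V] (G : SimpleGraph V) [DecidableRel G.Adj]

/-- Transition relation between darts: `e → f` iff the head of `e` is the tail of `f`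
and `f` is not the reversal of `e`. -/
def Step (d e : G.Dart) : Prop := d.snd = e.fst ∧ e ≠ d.symm

instance (d e : G.Dart) : Decidable (Step G d e) :=
  inferInstanceAs (Decidable (d.snd = e.fst ∧ e ≠ d.symm))

/-- `outdeg(e) = deg(h(e)) - 1`. -/
def outdeg (d : G.Dart) : ℕ := G.degree d.snd - 1

/-- `indeg(e) = deg(t(e)) - 1`. -/
def indeg (d : G.Dart) : ℕ := G.degree d.fst - 1

/-- The non-backtracking adjacency matrix. -/
def B : Matrix G.Dart G.Dart ℝ := fun d e => if Step G d e then 1 else 0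

/-- The NBRW transition matrix. -/
noncomputable def transMat : Matrix G.Dart G.Dart ℝ :=
  fun d e => if Step G d e then ((outdeg G d : ℝ))⁻¹ else 0

/-- NB-irreducibility: connected, min degree ≥ 2, max degree > 2. -/
def NBIrreducible : Prop :=
  G.Connected ∧ (∀ v, 2 ≤ G.degree v) ∧ (∃ v, 2 < G.degree v)

/-- `Λ(G)`, the geometric mean of out-degrees over directed edges. -/
noncomputable def Lambda : ℝ :=
  (∏ d : G.Dart, (outdeg G d : ℝ)) ^ ((Fintype.card G.Dart : ℝ)⁻¹)

/-- The Perron (largest real) eigenvalue of a matrix. -/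
noncomputable def perron {n : Type} [Fintype n] (M : Matrix n n ℝ) : ℝ :=
  sSup {r : ℝ | ∃ v : n → ℝ, v ≠ 0 ∧ M.mulVec v = r • v}

/-- A length-`ℓ` non-backtracking walk is a sequence of `ℓ+1` darts with consecutive
transitions. -/
def IsNBWalk {ℓ : ℕ} (ω : Fin (ℓ + 1) → G.Dart) : Prop :=
  ∀ i : Fin ℓ, Step G (ω i.castSucc) (ω i.succ)

instance {ℓ : ℕ} (ω : Fin (ℓ + 1) → G.Dart) : Decidable (IsNBWalk G ω) :=
  inferInstanceAs (Decidable (∀ i : Fin ℓ, Step G (ω i.castSucc) (ω i.succ)))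

/-- The set `Ω_ℓ` of length-`ℓ` non-backtracking walks. -/
def NBWalk (ℓ : ℕ) : Type := {ω : Fin (ℓ + 1) → G.Dart // IsNBWalk G ω}

instance (ℓ : ℕ) : Fintype (NBWalk G ℓ) := Subtype.fintype _

/-- The NBRW probability of a walk, started from the uniform stationary distribution. -/
noncomputable def mu {ℓ : ℕ} (ω : NBWalk G ℓ) : ℝ :=
  (Fintype.card G.Dart : ℝ)⁻¹ * ∏ i : Fin ℓ, ((outdeg G (ω.1 i.castSucc) : ℝ))⁻¹

/-- Expectation over `Ω_ℓ` with respect to `μ`. -/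
noncomputable def expect {ℓ : ℕ} (X : NBWalk G ℓ → ℝ) : ℝ :=
  ∑ ω : NBWalk G ℓ, mu G ω * X ω

/-- Variance over `Ω_ℓ` with respect to `μ`. -/
noncomputable def var {ℓ : ℕ} (X : NBWalk G ℓ → ℝ) : ℝ :=
  expect G (fun ω => (X ω - expect G X) ^ 2)

/-- `R_ℓ(ω) = ∑ log₂ outdeg(e_i)`: the number of random bits consumed. -/
noncomputable def bits {ℓ : ℕ} (ω : NBWalk G ℓ) : ℝ :=
  ∑ i : Fin ℓ, Real.logb 2 (outdeg G (ω.1 i.castSucc))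

/-- A suspended path `(e_0, …, e_n)` (of length `n+1`). -/
def IsSuspendedPath {n : ℕ} (P : Fin (n + 1) → G.Dart) : Prop :=
  (∀ i : Fin n, Step G (P i.castSucc) (P i.succ)) ∧
  (∀ i : Fin n, outdeg G (P i.castSucc) = 1) ∧
  1 < outdeg G (P (Fin.last n)) ∧
  (∀ i : Fin n, indeg G (P i.succ) = 1) ∧
  1 < indeg G (P 0)

/-- The suspended path condition: `outdeg(P)·indeg(P) = Λ(G)^{2|P|}`. -/
noncomputable def SuspendedPathCondition : Prop :=
  ∀ (n : ℕ) (P : Fin (n + 1) → G.Dart), IsSuspendedPath G P →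
    (outdeg G (P (Fin.last n)) : ℝ) * (indeg G (P 0) : ℝ) = Lambda G ^ (2 * (n + 1))

/-- A non-backtracking cycle `(e_0, …, e_n)` (of length `n+1`). -/
def IsNBCycle {n : ℕ} (C : Fin (n + 1) → G.Dart) : Prop :=
  ∀ i : Fin (n + 1), Step G (C i) (C (i + 1))

/-- The cycle condition: `∏_{e∈C} outdeg(e) = Λ(G)^{|C|}`. -/
noncomputable def CycleCondition : Prop :=
  ∀ (n : ℕ) (C : Fin (n + 1) → G.Dart), IsNBCycle G C →
    (∏ i : Fin (n + 1), (outdeg G (C i) : ℝ)) = Lambda G ^ (n + 1)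


section SC

open SimpleGraph

variable {G}

def Reaches (d e : G.Dart) : Prop := Relation.ReflTransGen (Step G) d e

lemma symm_fst (d : G.Dart) : d.symm.fst = d.snd := rfl
lemma symm_snd (d : G.Dart) : d.symm.snd = d.fst := rfl

lemma symm_inj {d e : G.Dart} (h : d.symm = e.symm) : d = e := by
  have := congrArg SimpleGraph.Dart.symm h
  simpa using this

/-- the out-fiber at a vertex has cardinality the degree -/
lemma card_out_fiber (v : V) :
    (univ.filter (fun d : G.Dart => d.fst = v)).card = G.degree v :=
  G.dart_fst_fiber_card_eq_degree v

lemma card_in_fiber (v : V) :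
    (univ.filter (fun d : G.Dart => d.snd = v)).card = G.degree v := by
  rw [← G.dart_fst_fiber_card_eq_degree v]
  apply Finset.card_bij (fun d _ => d.symm)
  · intro a ha; simp only [mem_filter, mem_univ, true_and] at ha ⊢; rw [symm_fst, ha]
  · intro a _ b _ h; exact symm_inj h
  · intro b hb; simp only [mem_filter, mem_univ, true_and] at hb
    exact ⟨b.symm, by simp [symm_snd, hb], by simp⟩

def succs (d : G.Dart) : Finset G.Dart := univ.filter (fun f => Step G d f)

def preds (f : G.Dart) : Finset G.Dart := univ.filter (fun g => Step G g f)

lemma succs_eq (d : G.Dart) :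
    succs d = (univ.filter (fun f : G.Dart => f.fst = d.snd)).erase d.symm := by
  ext f
  simp only [succs, mem_filter, mem_univ, true_and, mem_erase]
  simp only [Step]
  constructor
  · rintro ⟨h1, h2⟩; exact ⟨h2, h1.symm⟩
  · rintro ⟨h2, h1⟩; exact ⟨h1.symm, h2⟩

lemma preds_eq (f : G.Dart) :
    preds f = (univ.filter (fun g : G.Dart => g.snd = f.fst)).erase f.symm := by
  ext g
  simp only [preds, mem_filter, mem_univ, true_and, mem_erase]
  simp only [Step]
  constructor
  · rintro ⟨h1, h2⟩
    refine ⟨fun hg => h2 ?_, h1⟩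
    · subst hg; simp
  · rintro ⟨h2, h1⟩
    refine ⟨h1, fun hf => h2 ?_⟩
    · subst hf; simp

lemma card_succs (d : G.Dart) : (succs d).card = outdeg G d := by
  rw [succs_eq, Finset.card_erase_of_mem (by simp [symm_fst]), card_out_fiber]
  rfl

lemma card_preds (f : G.Dart) : (preds f).card = indeg G f := by
  rw [preds_eq, Finset.card_erase_of_mem (by simp [symm_snd]), card_in_fiber]
  rfl

lemma outdeg_eq_indeg {g f : G.Dart} (h : Step G g f) : outdeg G g = indeg G f := by
  unfold outdeg indeg; rw [h.1]

lemma exists_step (h2 : ∀ v, 2 ≤ G.degree v) (d : G.Dart) : ∃ f, Step G d f := by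
  have hc : 0 < (succs d).card := by
    rw [card_succs]
    have := h2 d.snd
    unfold outdeg; omega
  obtain ⟨f, hf⟩ := Finset.card_pos.mp hc
  exact ⟨f, (Finset.mem_filter.mp hf).2⟩

/-- "Bad" darts: darts that cannot reach their own reversal. -/
def Bad (d : G.Dart) : Prop := ¬ Reaches d d.symm

lemma reach_head_eq {d : G.Dart} (hb : Bad d) :
    ∀ g, Reaches d g → g.snd = d.snd → g = d := by
  intro g hg hsnd
  by_contra hne
  exact hb (hg.tail ⟨hsnd, fun h => hne (symm_inj (by simpa using h.symm))⟩)

lemma bad_deg_two (h2 : ∀ v, 2 ≤ G.degree v) {d : G.Dart} (hb : Bad d) :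
    G.degree d.snd = 2 := by
  classical
  set v := d.snd with hv
  set R : Finset G.Dart := univ.filter (fun g => Reaches d g) with hR
  have hmemR : ∀ {g}, g ∈ R ↔ Reaches d g := by
    intro g; simp [hR]
  have hdR : d ∈ R := hmemR.mpr Relation.ReflTransGen.refl
  have hsucc : ∀ g ∈ R, ∀ f, Step G g f → f ∈ R := fun g hg f hf =>
    hmemR.mpr ((hmemR.mp hg).tail hf)
  have hhead : ∀ g ∈ R, g.snd = v → g = d := fun g hg =>
    reach_head_eq hb g (hmemR.mp hg)
  have hsymmR : d.symm ∉ R := fun h => hb (hmemR.mp h)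
  set H : Finset V := R.image (fun g => g.snd) with hH
  set I : V → Finset G.Dart := fun w => R.filter (fun g => g.snd = w) with hI
  set O : V → Finset G.Dart := fun w => R.filter (fun g => g.fst = w) with hO
  have hIsum : ∑ w ∈ H, (I w).card = R.card :=
    (Finset.card_eq_sum_card_fiberwise (fun g hg => Finset.mem_image_of_mem _ hg)).symm
  have hOsum : ∑ w ∈ H, (O w).card ≤ R.card := by
    rw [← Finset.card_biUnion]
    · exact Finset.card_le_card (Finset.biUnion_subset.mpr fun w _ => Finset.filter_subset _ _)
    · intro a _ b _ hab
      refine Finset.disjoint_left.mpr ?_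
      intro x hx1 hx2
      simp only [hO, Finset.mem_filter] at hx1 hx2
      exact hab (hx1.2 ▸ hx2.2)
  have hvH : v ∈ H := Finset.mem_image_of_mem _ hdR
  have hIv : (I v).card = 1 := by
    rw [Finset.card_eq_one]
    refine ⟨d, ?_⟩
    ext g
    simp only [hI, Finset.mem_filter, Finset.mem_singleton]
    constructor
    · rintro ⟨hg, hs⟩; exact hhead g hg hs
    · rintro rfl; exact ⟨hdR, rfl⟩
  have hOv : (O v).card = G.degree v - 1 := by
    have heq : O v = (univ.filter (fun f : G.Dart => f.fst = v)).erase d.symm := by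
      ext x
      simp only [hO, Finset.mem_filter, Finset.mem_erase, Finset.mem_univ, true_and]
      constructor
      · rintro ⟨hx, hfst⟩
        exact ⟨fun h => hsymmR (h ▸ hx), hfst⟩
      · rintro ⟨hne, hfst⟩
        exact ⟨hsucc d hdR x ⟨hfst.symm, hne⟩, hfst⟩
    rw [heq, Finset.card_erase_of_mem (by simp [symm_fst, hv]), card_out_fiber]
  have hIO : ∀ w ∈ H, w ≠ v → (I w).card ≤ (O w).card := by
    intro w hw hwv
    obtain ⟨g, hgR, hgsnd⟩ : ∃ g, g ∈ R ∧ g.snd = w := by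
      obtain ⟨g, hg1, hg2⟩ := Finset.mem_image.mp hw; exact ⟨g, hg1, hg2⟩
    have key : ∀ g', g' ∈ R → g'.snd = w → ∀ x : G.Dart, x.fst = w → x ≠ g'.symm → x ∈ O w := by
      intro g' hg' hg's x hx hxne
      exact Finset.mem_filter.mpr ⟨hsucc g' hg' x ⟨hg's.trans hx.symm, hxne⟩, hx⟩
    by_cases h1 : (I w).card ≤ 1
    · have hsub : (univ.filter (fun f : G.Dart => f.fst = w)).erase g.symm ⊆ O w := by
        intro x hx
        rw [Finset.mem_erase, Finset.mem_filter] at hx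
        exact key g hgR hgsnd x hx.2.2 hx.1
      have hle := Finset.card_le_card hsub
      rw [Finset.card_erase_of_mem (by simp [symm_fst, hgsnd]), card_out_fiber] at hle
      have := h2 w
      omega
    · push_neg at h1
      obtain ⟨g', hg'I, hg'ne⟩ := Finset.exists_mem_ne h1 g
      rw [hI, Finset.mem_filter] at hg'I
      have hsub : (univ.filter (fun f : G.Dart => f.fst = w)) ⊆ O w := by
        intro x hx
        rw [Finset.mem_filter] at hx
        by_cases hxg : x = g.symm
        · refine key g' hg'I.1 hg'I.2 x hx.2 ?_
          intro h
          exact hg'ne (symm_inj (h.symm.trans hxg))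
        · exact key g hgR hgsnd x hx.2 hxg
      have hOcard := Finset.card_le_card hsub
      rw [card_out_fiber] at hOcard
      have hIcard : (I w).card ≤ G.degree w := by
        have hsub2 : I w ⊆ univ.filter (fun g : G.Dart => g.snd = w) := by
          intro x hx
          rw [hI, Finset.mem_filter] at hx
          exact Finset.mem_filter.mpr ⟨Finset.mem_univ _, hx.2⟩
        have := Finset.card_le_card hsub2
        rwa [card_in_fiber] at this
      omega
  have hsplitI : (I v).card + ∑ w ∈ H.erase v, (I w).card = ∑ w ∈ H, (I w).card :=
    Finset.add_sum_erase H (fun w => (I w).card) hvH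
  have hsplitO : (O v).card + ∑ w ∈ H.erase v, (O w).card = ∑ w ∈ H, (O w).card :=
    Finset.add_sum_erase H (fun w => (O w).card) hvH
  have hrest : ∑ w ∈ H.erase v, (I w).card ≤ ∑ w ∈ H.erase v, (O w).card :=
    Finset.sum_le_sum (fun w hw => hIO w (Finset.mem_of_mem_erase hw) (Finset.ne_of_mem_erase hw))
  have hd2 := h2 v
  omega

lemma walk_closed {C : Finset V} (hclosed : ∀ w ∈ C, ∀ x, G.Adj w x → x ∈ C)
    {u w : V} (p : G.Walk u w) (hu : u ∈ C) : w ∈ C := by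
  induction p with
  | nil => exact hu
  | cons h _ ih => exact ih (hclosed _ hu _ h)

lemma bad_succ_closed {d f : G.Dart} (hb : Bad d) (hs : Step G d f) : Bad f := by
  intro hf
  have h1 : Reaches d f.symm := Relation.ReflTransGen.head hs hf
  have h2 : f.symm.snd = d.snd := by rw [symm_snd, hs.1]
  have := reach_head_eq hb f.symm h1 h2
  exact hs.2 (by rw [← this]; simp)

lemma no_bad (hc : G.Connected) (h2 : ∀ v, 2 ≤ G.degree v)
    (h3 : ∃ v, 2 < G.degree v) (d : G.Dart) : Reaches d d.symm := by
  by_contra hb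
  -- build the forward sequence of bad darts
  have hseq : ∃ seq : ℕ → G.Dart, seq 0 = d ∧ ∀ n, Step G (seq n) (seq (n + 1)) := by
    refine ⟨fun n => Nat.rec d (fun _ e => Classical.choose (exists_step h2 e)) n, rfl, ?_⟩
    intro n
    exact Classical.choose_spec (exists_step h2 _)
  obtain ⟨seq, hseq0, hstep⟩ := hseq
  have hbad : ∀ n, Bad (seq n) := by
    intro n
    induction n with
    | zero => rw [hseq0]; exact hb
    | succ n ih => exact bad_succ_closed ih (hstep n)
  have hdeg : ∀ n, G.degree (seq n).snd = 2 := fun n => bad_deg_two h2 (hbad n)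
  -- pigeonhole
  obtain ⟨i, j, hij, heq⟩ : ∃ i j, i < j ∧ seq i = seq j := by
    obtain ⟨a, b, hab, he⟩ := Finite.exists_ne_map_eq_of_infinite seq
    rcases lt_or_gt_of_ne hab with h | h
    · exact ⟨a, b, h, he⟩
    · exact ⟨b, a, h, he.symm⟩
  set C : Finset V := (Finset.Ico i j).image (fun k => (seq k).snd) with hC
  have hmemC : ∀ k, i ≤ k → k < j → (seq k).snd ∈ C := fun k h1 h2 =>
    Finset.mem_image_of_mem _ (Finset.mem_Ico.mpr ⟨h1, h2⟩)
  have hdegC : ∀ w ∈ C, G.degree w = 2 := by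
    intro w hw
    obtain ⟨k, _, rfl⟩ := Finset.mem_image.mp hw
    exact hdeg k
  have hclosed : ∀ w ∈ C, ∀ x, G.Adj w x → x ∈ C := by
    intro w hw x hadj
    obtain ⟨k, hk, rfl⟩ := Finset.mem_image.mp hw
    rw [Finset.mem_Ico] at hk
    set a := (seq k).fst with ha
    set b := (seq (k + 1)).snd with hbdef
    have hfst : (seq (k + 1)).fst = (seq k).snd := ((hstep k).1).symm
    have hadja : G.Adj (seq k).snd a := (seq k).adj.symm
    have hadjb : G.Adj (seq k).snd b := hfst ▸ (seq (k + 1)).adj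
    have hab : a ≠ b := by
      intro h
      apply (hstep k).2
      ext : 1
      rw [Prod.ext_iff]
      exact ⟨hfst, h.symm⟩
    -- the neighbor finset is exactly {a, b}
    have hsub : ({a, b} : Finset V) ⊆ G.neighborFinset (seq k).snd := by
      intro x hx
      rcases Finset.mem_insert.mp hx with rfl | hx
      · exact (SimpleGraph.mem_neighborFinset _ _ _).mpr hadja
      · rw [Finset.mem_singleton] at hx
        subst hx
        exact (SimpleGraph.mem_neighborFinset _ _ _).mpr hadjb
    have hcard : ({a, b} : Finset V).card = 2 := Finset.card_pair hab
    have hnb : G.neighborFinset (seq k).snd = {a, b} := by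
      symm
      apply Finset.eq_of_subset_of_card_le hsub
      rw [hcard, SimpleGraph.card_neighborFinset_eq_degree, hdeg k]
    have hx : x ∈ ({a, b} : Finset V) := by
      rw [← hnb, SimpleGraph.mem_neighborFinset]
      exact hadj
    have haC : a ∈ C := by
      rcases Nat.eq_or_lt_of_le hk.1 with hik | hik
      · -- k = i : use seq i = seq j, a = (seq j).fst = (seq (j-1)).snd
        have hj1 : (seq (j - 1)).snd = a := by
          have hstep' := hstep (j - 1)
          have hj : j - 1 + 1 = j := by omega
          rw [hj] at hstep'
          rw [ha, ← hik, heq]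
          exact hstep'.1
        rw [← hj1]
        exact hmemC (j - 1) (by omega) (by omega)
      · have hprev : (seq (k - 1)).snd = a := by
          have hstep' := hstep (k - 1)
          have hk1 : k - 1 + 1 = k := by omega
          rw [hk1] at hstep'
          rw [ha]; exact hstep'.1
        rw [← hprev]
        exact hmemC (k - 1) (by omega) (by omega)
    have hbC : b ∈ C := by
      rcases Nat.lt_or_ge (k + 1) j with hkj | hkj
      · exact hmemC (k + 1) (by omega) hkj
      · have : k + 1 = j := by omega
        rw [hbdef, this, ← heq]
        exact hmemC i le_rfl (by omega)
    rcases Finset.mem_insert.mp hx with rfl | hx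
    · exact haC
    · rw [Finset.mem_singleton] at hx; subst hx; exact hbC
  -- C is adjacency-closed and nonempty, so by connectivity it is everything
  obtain ⟨v3, hv3⟩ := h3
  have hiC : (seq i).snd ∈ C := hmemC i le_rfl hij
  have hv3C : v3 ∈ C := walk_closed hclosed (hc.preconnected _ v3).some hiC
  have := hdegC v3 hv3C
  omega

lemma reaches_all (hc : G.Connected) (h2 : ∀ v, 2 ≤ G.degree v)
    (h3 : ∃ v, 2 < G.degree v) (d e : G.Dart) : Reaches d e := by
  classical
  set T : Set V := {v | ∀ g : G.Dart, g.fst = v → Reaches d g} with hT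
  have hbase : d.snd ∈ T := by
    intro g hg
    by_cases hgs : g = d.symm
    · rw [hgs]; exact no_bad hc h2 h3 d
    · exact Relation.ReflTransGen.single ⟨hg.symm, hgs⟩
  have hclosed : ∀ v ∈ T, ∀ w, G.Adj v w → w ∈ T := by
    intro v hv w hadj
    set g0 : G.Dart := ⟨(v, w), hadj⟩ with hg0
    have hreach0 : Reaches d g0 := hv g0 rfl
    intro g hg
    by_cases hgs : g = g0.symm
    · rw [hgs]
      exact hreach0.trans (no_bad hc h2 h3 g0)
    · exact hreach0.tail ⟨hg.symm, hgs⟩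
  have hall : ∀ v, v ∈ T := by
    intro v
    have hwalkmem : ∀ (u w : V) (_ : G.Walk u w), u ∈ T → w ∈ T := by
      intro u w p
      induction p with
      | nil => exact id
      | cons h _ ih => exact fun hu => ih (hclosed _ hu _ h)
    exact hwalkmem d.snd v (hc.preconnected d.snd v).some hbase
  exact hall e.fst e rfl

lemma transGen_all (hc : G.Connected) (h2 : ∀ v, 2 ≤ G.degree v)
    (h3 : ∃ v, 2 < G.degree v) (d e : G.Dart) :
    Relation.TransGen (Step G) d e := by
  obtain ⟨f, hf⟩ := exists_step h2 d
  exact Relation.TransGen.head' hf (reaches_all hc h2 h3 f e)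

end SC

section Cycles

open List

variable {G}

/-- A non-backtracking cycle based at dart `x` with tail `T`: the cyclic dart list is `x :: T`. -/
def IsCyc (x : G.Dart) (T : List G.Dart) : Prop := List.Chain (Step G) x (T ++ [x])

/-- Product of out-degrees along a list of darts. -/
noncomputable def Pr (l : List G.Dart) : ℝ := (l.map (fun e => (outdeg G e : ℝ))).prod

@[simp] lemma Pr_nil : Pr ([] : List G.Dart) = 1 := by simp [Pr]

@[simp] lemma Pr_cons (a : G.Dart) (l : List G.Dart) :
    Pr (a :: l) = (outdeg G a : ℝ) * Pr l := by simp [Pr]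

@[simp] lemma Pr_append (l m : List G.Dart) : Pr (l ++ m) = Pr l * Pr m := by simp [Pr]

lemma Pr_pos (h2 : ∀ v, 2 ≤ G.degree v) (l : List G.Dart) : 0 < Pr l := by
  induction l with
  | nil => simp
  | cons a l ih =>
    rw [Pr_cons]
    have ha : 0 < outdeg G a := by have := h2 a.snd; unfold outdeg; omega
    positivity

/-- `a`-fold repetition of a list. -/
def spow (s : List G.Dart) : ℕ → List G.Dart
  | 0 => []
  | a + 1 => s ++ spow s a

@[simp] lemma spow_zero (s : List G.Dart) : spow s 0 = [] := rfl

@[simp] lemma spow_succ (s : List G.Dart) (a : ℕ) : spow s (a + 1) = s ++ spow s a := rfl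

@[simp] lemma length_spow (s : List G.Dart) (a : ℕ) : (spow s a).length = a * s.length := by
  induction a with
  | zero => simp
  | succ a ih => simp [spow, ih]; ring

@[simp] lemma Pr_spow (s : List G.Dart) (a : ℕ) : Pr (spow s a) = Pr s ^ a := by
  induction a with
  | zero => simp
  | succ a ih => simp [spow, ih]; ring

lemma chain_glue {x y : G.Dart} {l m : List G.Dart}
    (h1 : List.Chain (Step G) x (l ++ [y])) (h2 : List.Chain (Step G) y m) :
    List.Chain (Step G) x (l ++ y :: m) :=
  List.isChain_cons_split.mpr ⟨h1, h2⟩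

lemma chain_spow {x : G.Dart} {m : List G.Dart} (h : List.Chain (Step G) x (m ++ [x]))
    (a : ℕ) {Z : List G.Dart} (hZ : List.Chain (Step G) x Z) :
    List.Chain (Step G) x (spow (m ++ [x]) a ++ Z) := by
  induction a with
  | zero => simpa
  | succ a ih =>
    have : spow (m ++ [x]) (a + 1) ++ Z = m ++ x :: (spow (m ++ [x]) a ++ Z) := by
      simp [spow]
    rw [this]
    exact chain_glue h ih

lemma exists_conn {x y : G.Dart} (h : Relation.TransGen (Step G) x y) :
    ∃ p, List.Chain (Step G) x (p ++ [y]) := by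
  induction h with
  | single h => exact ⟨[], List.isChain_pair.mpr h⟩
  | @tail b c _ hstep ih =>
    obtain ⟨p, hp⟩ := ih
    refine ⟨p ++ [b], ?_⟩
    rw [List.append_assoc]
    exact chain_glue hp (List.isChain_pair.mpr hstep)

lemma isCyc_exists (hc : G.Connected) (h2 : ∀ v, 2 ≤ G.degree v)
    (h3 : ∃ v, 2 < G.degree v) (x : G.Dart) : ∃ T, IsCyc x T :=
  exists_conn (transGen_all hc h2 h3 x x)

/-- convert a list cycle to a `Fin`-indexed `IsNBCycle` -/
lemma isNBCycle_get {x : G.Dart} {T : List G.Dart} (h : IsCyc x T) {n : ℕ}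
    (hn : n + 1 = (x :: T).length) :
    IsNBCycle G (fun i : Fin (n + 1) => (x :: T).get (Fin.cast hn i)) := by
  have hT : T.length = n := by simp at hn; omega
  subst hT
  intro i
  have hchain : List.Chain' (Step G) ((x :: T) ++ [x]) := by
    rw [List.cons_append]; exact h
  replace hchain := List.isChain_iff_getElem.mp hchain
  have hFlen : ((x :: T) ++ [x]).length = T.length + 2 := by simp
  have hget : ∀ (k : ℕ) (hk : k < T.length + 1),
      ((x :: T) ++ [x])[k]'(by simp; omega) = (x :: T)[k]'(by simp; omega) :=
    fun k hk => List.getElem_append_left _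
  have hstep : ∀ (k : ℕ) (hk : k < T.length + 1),
      Step G (((x :: T) ++ [x])[k]'(by simp; omega)) (((x :: T) ++ [x])[k+1]'(by simp; omega)) := by
    intro k hk
    exact hchain k (by simp; omega)
  simp only [List.get_eq_getElem, Fin.coe_cast]
  by_cases hi : (i : ℕ) < T.length
  · have hadd : ((i + 1 : Fin (T.length + 1)) : ℕ) = (i : ℕ) + 1 := by
      apply Fin.val_add_one_of_lt
      rw [Fin.lt_iff_val_lt_val]
      simpa using hi
    simp only [hadd]
    have hh := hstep i (by omega)
    rw [hget _ (by omega), hget _ (by omega)] at hh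
    exact hh
  · have hival : (i : ℕ) = T.length := by omega
    have hieq : i = Fin.last T.length := by apply Fin.ext; simpa using hival
    have hadd : ((i + 1 : Fin (T.length + 1)) : ℕ) = 0 := by
      rw [hieq, Fin.last_add_one]; rfl
    have hlast : ((x :: T) ++ [x])[T.length + 1]'(by simp) = x := by
      have h0 : (x :: T).length = T.length + 1 := by simp
      rw [List.getElem_append_right (by omega)]
      simp
    have h00 : ((x :: T))[0] = x := rfl
    simp only [hadd, hival, h00]
    have hh := hstep T.length (by omega)
    rw [hget _ (by omega), hlast] at hh
    exact hh

lemma prod_get {x : G.Dart} {T : List G.Dart} {n : ℕ} (hn : n + 1 = (x :: T).length) :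
    (∏ i : Fin (n + 1), (outdeg G ((x :: T).get (Fin.cast hn i)) : ℝ)) = Pr (x :: T) := by
  have h1 : Pr (x :: T) = ∏ i : Fin (x :: T).length, (outdeg G ((x :: T).get i) : ℝ) := by
    rw [Pr, ← List.ofFn_getElem_eq_map (x :: T) (fun e => (outdeg G e : ℝ)), List.prod_ofFn]
    rfl
  rw [h1, ← Fin.prod_congr' (fun i : Fin (x :: T).length => (outdeg G ((x :: T).get i) : ℝ)) hn]

lemma Pr_rotate (a : G.Dart) (l : List G.Dart) : Pr (l ++ [a]) = Pr (a :: l) := by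
  simp [mul_comm]

lemma cycle_pow_eq (hc : G.Connected) (h2 : ∀ v, 2 ≤ G.degree v) (h3 : ∃ v, 2 < G.degree v)
    (Heq : ∀ (n : ℕ) (C₁ C₂ : Fin (n + 1) → G.Dart), IsNBCycle G C₁ → IsNBCycle G C₂ →
      (∃ i j, C₁ i = C₂ j) →
      (∏ i, (outdeg G (C₁ i) : ℝ)) = ∏ i, (outdeg G (C₂ i) : ℝ))
    {x y : G.Dart} {Tc Td : List G.Dart} (hcx : IsCyc x Tc) (hcy : IsCyc y Td) :
    Pr (x :: Tc) ^ (Td.length + 1) = Pr (y :: Td) ^ (Tc.length + 1) := by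
  obtain ⟨p, hp⟩ := exists_conn (transGen_all hc h2 h3 x y)
  obtain ⟨r, hr⟩ := exists_conn (transGen_all hc h2 h3 y x)
  set sc := Tc ++ [x] with hsc
  set sd := Td ++ [y] with hsd
  set Lc := Tc.length + 1 with hLc
  set Ld := Td.length + 1 with hLd
  set Tail : ℕ → ℕ → List G.Dart :=
    fun a b => spow sc a ++ (p ++ y :: (spow sd b ++ r)) with hTail
  have hcyct : ∀ a b, IsCyc x (Tail a b) := by
    intro a b
    have s1 : List.Chain (Step G) y (r ++ [x]) := hr
    have s2 : List.Chain (Step G) y (spow sd b ++ (r ++ [x])) := chain_spow hcy b s1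
    have s3 : List.Chain (Step G) x (p ++ y :: (spow sd b ++ (r ++ [x]))) := chain_glue hp s2
    have s4 := chain_spow hcx a s3
    unfold Tail
    unfold IsCyc
    rw [show (spow sc a ++ (p ++ y :: (spow sd b ++ r))) ++ [x]
        = spow (Tc ++ [x]) a ++ (p ++ y :: (spow sd b ++ (r ++ [x]))) by
      simp [hsc, List.append_assoc]]
    exact s4
  have hlen : ∀ a b, (Tail a b).length = a * Lc + (p.length + 1 + b * Ld + r.length) := by
    intro a b
    simp only [hTail, List.length_append, length_spow, List.length_cons, hsc, hsd, hLc, hLd,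
      List.length_append, List.length_singleton, List.length_nil]
    ring
  have hPr : ∀ a b, Pr (x :: Tail a b)
      = (Pr sc ^ a * Pr sd ^ b) * ((outdeg G x : ℝ) * (Pr p * ((outdeg G y : ℝ) * Pr r))) := by
    intro a b
    simp only [hTail, Pr_cons, Pr_append, Pr_spow]
    ring
  set n := (Tail (1 + Ld) 1).length with hn
  have hn₁ : n + 1 = (x :: Tail (1 + Ld) 1).length := by simp [hn]
  have hn₂ : n + 1 = (x :: Tail 1 (1 + Lc)).length := by
    simp only [List.length_cons, Nat.add_right_cancel_iff, hn]
    rw [hlen, hlen]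
    ring
  have hprodeq := Heq n _ _ (isNBCycle_get (hcyct (1 + Ld) 1) hn₁)
    (isNBCycle_get (hcyct 1 (1 + Lc)) hn₂) ⟨0, 0, rfl⟩
  rw [prod_get hn₁, prod_get hn₂, hPr, hPr] at hprodeq
  have hox : (0:ℝ) < outdeg G x := by
    have := h2 x.snd; unfold outdeg; exact_mod_cast by omega
  have hoy : (0:ℝ) < outdeg G y := by
    have := h2 y.snd; unfold outdeg; exact_mod_cast by omega
  have hK : (0:ℝ) < (outdeg G x : ℝ) * (Pr p * ((outdeg G y : ℝ) * Pr r)) := by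
    have := Pr_pos h2 p; have := Pr_pos h2 r; positivity
  have hcancel : Pr sc ^ (1 + Ld) * Pr sd ^ 1 = Pr sc ^ 1 * Pr sd ^ (1 + Lc) :=
    mul_right_cancel₀ (ne_of_gt hK) hprodeq
  have hA := Pr_pos h2 sc
  have hB := Pr_pos h2 sd
  have hkey : Pr sc ^ Ld = Pr sd ^ Lc := by
    apply mul_left_cancel₀ (ne_of_gt hA)
    apply mul_right_cancel₀ (ne_of_gt hB)
    calc Pr sc * Pr sc ^ Ld * Pr sd = Pr sc ^ (1 + Ld) * Pr sd ^ 1 := by ring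
    _ = Pr sc ^ 1 * Pr sd ^ (1 + Lc) := hcancel
    _ = Pr sc * Pr sd ^ Lc * Pr sd := by ring
  rw [hsc, hsd, Pr_rotate, Pr_rotate] at hkey
  exact hkey

lemma dart_nonempty (h3 : ∃ v, 2 < G.degree v) : Nonempty G.Dart := by
  obtain ⟨v, hv⟩ := h3
  have hpos : 0 < G.degree v := by omega
  rw [SimpleGraph.degree_pos_iff_exists_adj] at hpos
  obtain ⟨w, hw⟩ := hpos
  exact ⟨⟨(v, w), hw⟩⟩

lemma outdeg_cast_pos (h2 : ∀ v, 2 ≤ G.degree v) (e : G.Dart) : (0:ℝ) < (outdeg G e : ℝ) := by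
  have := h2 e.snd
  have : 0 < outdeg G e := by unfold outdeg; omega
  exact_mod_cast this

lemma exists_phi (hc : G.Connected) (h2 : ∀ v, 2 ≤ G.degree v) (h3 : ∃ v, 2 < G.degree v)
    {lam : ℝ} (hlam : 0 < lam)
    (hcyc : ∀ (x : G.Dart) (T : List G.Dart), IsCyc x T → Pr (x :: T) = lam ^ (T.length + 1)) :
    ∃ phi : G.Dart → ℝ, (∀ e, 0 < phi e) ∧
      ∀ e f, Step G e f → phi f = phi e * lam / (outdeg G e : ℝ) := by
  classical
  obtain ⟨e0⟩ := dart_nonempty h3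
  have hwalk : ∀ e : G.Dart, ∃ l : List G.Dart, List.Chain (Step G) e0 l ∧
      (e0 :: l).getLast (List.cons_ne_nil _ _) = e :=
    fun e => List.exists_isChain_cons_of_relationReflTransGen (reaches_all hc h2 h3 e0 e)
  choose w hwch hwlast using hwalk
  set phi : G.Dart → ℝ :=
    fun e => lam ^ (w e).length * (outdeg G e : ℝ) / Pr (e0 :: w e) with hphi
  have hpos : ∀ e, 0 < phi e := by
    intro e
    have h1 := Pr_pos h2 (e0 :: w e)
    have h2' := outdeg_cast_pos h2 e
    rw [hphi]
    positivity
  -- well-definedness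
  have hwd : ∀ (e : G.Dart) (m : List G.Dart) (hm : List.Chain (Step G) e0 m),
      (e0 :: m).getLast (List.cons_ne_nil _ _) = e →
      lam ^ m.length * (outdeg G e : ℝ) / Pr (e0 :: m) = phi e := by
    intro e
    obtain ⟨rr, hrr⟩ := exists_conn (transGen_all hc h2 h3 e e0)
    have key : ∀ (m : List G.Dart), List.Chain (Step G) e0 m →
        (e0 :: m).getLast (List.cons_ne_nil _ _) = e →
        Pr (e0 :: m) * Pr rr = lam ^ (m.length + rr.length + 1) := by
      intro m hm hlast
      have hcy : IsCyc e0 (m ++ rr) := by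
        rcases eq_or_ne m [] with rfl | hne
        · simp only [List.getLast_singleton] at hlast
          subst hlast
          simpa [IsCyc] using hrr
        · have hm' : m.dropLast ++ [e] = m := by
            rw [List.getLast_cons hne] at hlast
            rw [← hlast]
            exact List.dropLast_append_getLast hne
          unfold IsCyc
          have hglue := chain_glue (x := e0) (y := e) (l := m.dropLast) (m := rr ++ [e0])
            (by rw [hm']; exact hm) hrr
          rw [show (m ++ rr) ++ [e0] = m.dropLast ++ e :: (rr ++ [e0]) by
            rw [← hm']; simp]
          exact hglue
      have := hcyc e0 (m ++ rr) hcy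
      rw [show Pr (e0 :: (m ++ rr)) = Pr (e0 :: m) * Pr rr by simp; ring] at this
      rw [this]
      congr 1
      simp only [List.length_append]
    intro m hm hlast
    have h1 := key m hm hlast
    have h2' := key (w e) (hwch e) (hwlast e)
    have hPm := Pr_pos h2 (e0 :: m)
    have hPw := Pr_pos h2 (e0 :: w e)
    have hPr := Pr_pos h2 rr
    have h3' : Pr (e0 :: m) * Pr rr * lam ^ (w e).length
        = Pr (e0 :: w e) * Pr rr * lam ^ m.length := by
      calc Pr (e0 :: m) * Pr rr * lam ^ (w e).length
          = lam ^ (m.length + rr.length + 1) * lam ^ (w e).length := by rw [h1]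
        _ = lam ^ ((w e).length + rr.length + 1) * lam ^ m.length := by
            rw [← pow_add, ← pow_add]; ring_nf
        _ = Pr (e0 :: w e) * Pr rr * lam ^ m.length := by rw [h2']
    have hmain : Pr (e0 :: m) * lam ^ (w e).length = Pr (e0 :: w e) * lam ^ m.length := by
      apply mul_right_cancel₀ hPr.ne'
      calc Pr (e0 :: m) * lam ^ (w e).length * Pr rr
          = Pr (e0 :: m) * Pr rr * lam ^ (w e).length := by ring
        _ = Pr (e0 :: w e) * Pr rr * lam ^ m.length := h3'
        _ = Pr (e0 :: w e) * lam ^ m.length * Pr rr := by ring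
    rw [hphi, div_eq_div_iff hPm.ne' hPw.ne']
    linear_combination (-(outdeg G e : ℝ)) * hmain
  refine ⟨phi, hpos, ?_⟩
  intro e f hef
  -- extend the chosen walk for e by f
  have hch' : List.Chain (Step G) e0 (w e ++ [f]) := by
    rcases eq_or_ne (w e) [] with hne | hne
    · have he0 : e = e0 := by
        have := hwlast e
        rw [hne] at this
        simpa using this.symm
      rw [hne]
      subst he0
      exact List.isChain_pair.mpr hef
    · have hlaste : (w e).getLast hne = e := by
        have h' := hwlast e
        rwa [List.getLast_cons hne] at h'
      have hm' : (w e).dropLast ++ [e] = w e := by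
        have hdl := List.dropLast_append_getLast hne
        rwa [hlaste] at hdl
      have hglue := chain_glue (x := e0) (y := e) (l := (w e).dropLast) (m := [f])
        (by rw [hm']; exact hwch e) (List.isChain_pair.mpr hef)
      rw [show w e ++ [f] = (w e).dropLast ++ e :: [f] by rw [← hm']; simp]
      exact hglue
  have hlast' : ((e0 :: (w e ++ [f])).getLast (List.cons_ne_nil _ _)) = f := by
    simp [List.getLast_append]
  have hf := hwd f (w e ++ [f]) hch' hlast'
  have he : lam ^ (w e).length * (outdeg G e : ℝ) / Pr (e0 :: w e) = phi e :=
    hwd e (w e) (hwch e) (hwlast e)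
  have hPw := Pr_pos h2 (e0 :: w e)
  have hof := outdeg_cast_pos h2 f
  have hoe := outdeg_cast_pos h2 e
  rw [← hf, ← he]
  rw [show Pr (e0 :: (w e ++ [f])) = Pr (e0 :: w e) * (outdeg G f : ℝ) by simp; ring]
  rw [List.length_append, List.length_singleton, pow_add, pow_one]
  have hne1 : (outdeg G f : ℝ) ≠ 0 := hof.ne'
  have hne2 : (outdeg G e : ℝ) ≠ 0 := hoe.ne'
  have hne3 : Pr (e0 :: w e) ≠ 0 := hPw.ne'
  have hne4 : Pr (w e) ≠ 0 := (Pr_pos h2 (w e)).ne'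
  have hne5 : (outdeg G e0 : ℝ) ≠ 0 := (outdeg_cast_pos h2 e0).ne'
  field_simp

end Cycles

section Spectral

variable {G}

lemma mulVec_eq (v : G.Dart → ℝ) (e : G.Dart) :
    (B G).mulVec v e = ∑ f ∈ succs e, v f := by
  rw [Matrix.mulVec, dotProduct]
  simp only [succs]
  rw [Finset.sum_filter]
  apply Finset.sum_congr rfl
  intro f _
  by_cases h : Step G e f <;> simp [B, h]

lemma sum_phi_succs (h2 : ∀ v, 2 ≤ G.degree v) {lam : ℝ} {phi : G.Dart → ℝ}
    (hstep : ∀ e f, Step G e f → phi f = phi e * lam / (outdeg G e : ℝ)) (e : G.Dart) :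
    ∑ f ∈ succs e, phi f = lam * phi e := by
  have hconst : ∀ f ∈ succs e, phi f = phi e * lam / (outdeg G e : ℝ) := fun f hf =>
    hstep e f (Finset.mem_filter.mp hf).2
  rw [Finset.sum_congr rfl hconst, Finset.sum_const, card_succs, nsmul_eq_mul]
  have h := outdeg_cast_pos h2 e
  field_simp

lemma eigen_le (h2 : ∀ v, 2 ≤ G.degree v) {lam : ℝ} (hlam : 0 < lam)
    {phi : G.Dart → ℝ} (hpos : ∀ e, 0 < phi e)
    (hstep : ∀ e f, Step G e f → phi f = phi e * lam / (outdeg G e : ℝ))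
    {r : ℝ} {v : G.Dart → ℝ} (hv : v ≠ 0) (heig : (B G).mulVec v = r • v) : r ≤ lam := by
  obtain ⟨e1, he1⟩ := Function.ne_iff.mp hv
  have hne : (Finset.univ : Finset G.Dart).Nonempty := ⟨e1, Finset.mem_univ e1⟩
  obtain ⟨estar, _, hmax⟩ := Finset.exists_max_image Finset.univ (fun e => |v e| / phi e) hne
  set c := |v estar| / phi estar with hcdef
  have hub : ∀ f, |v f| ≤ c * phi f := fun f =>
    (div_le_iff₀ (hpos f)).mp (hmax f (Finset.mem_univ f))
  have hc : 0 < c :=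
    lt_of_lt_of_le (div_pos (abs_pos.mpr (by simpa using he1)) (hpos e1)) (hmax e1 (Finset.mem_univ e1))
  have hsum : r * v estar = ∑ f ∈ succs estar, v f := by
    have h0 := congrFun heig estar
    rw [mulVec_eq] at h0
    simpa using h0.symm
  have hbound : |r| * |v estar| ≤ c * (lam * phi estar) := by
    rw [← abs_mul, hsum]
    calc |∑ f ∈ succs estar, v f| ≤ ∑ f ∈ succs estar, |v f| :=
          Finset.abs_sum_le_sum_abs _ _
      _ ≤ ∑ f ∈ succs estar, c * phi f := Finset.sum_le_sum (fun f _ => hub f)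
      _ = c * ∑ f ∈ succs estar, phi f := by rw [Finset.mul_sum]
      _ = c * (lam * phi estar) := by rw [sum_phi_succs h2 hstep]
  have hveq : |v estar| = c * phi estar := (div_mul_cancel₀ _ (hpos estar).ne').symm
  rw [hveq] at hbound
  have hcp : 0 < c * phi estar := mul_pos hc (hpos estar)
  have habs : |r| ≤ lam := by
    have h' : |r| * (c * phi estar) ≤ lam * (c * phi estar) := by
      calc |r| * (c * phi estar) ≤ c * (lam * phi estar) := hbound
      _ = lam * (c * phi estar) := by ring
    exact le_of_mul_le_mul_right h' hcp
  exact (le_abs_self r).trans habs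

lemma lambda_eq (h2 : ∀ v, 2 ≤ G.degree v) (h3 : ∃ v, 2 < G.degree v) {lam : ℝ} (hlam : 0 < lam)
    {phi : G.Dart → ℝ} (hpos : ∀ e, 0 < phi e)
    (hstep : ∀ e f, Step G e f → phi f = phi e * lam / (outdeg G e : ℝ)) :
    Lambda G = lam := by
  classical
  have hcard : 0 < Fintype.card G.Dart := Fintype.card_pos_iff.mpr (dart_nonempty h3)
  have hlog : ∀ e f, Step G e f →
      Real.log (phi f) = Real.log (phi e) + Real.log lam - Real.log (outdeg G e) := by
    intro e f hef
    rw [hstep e f hef, Real.log_div (mul_pos (hpos e) hlam).ne' (outdeg_cast_pos h2 e).ne',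
      Real.log_mul (hpos e).ne' hlam.ne']
  set D := ∑ e : G.Dart, ∑ f ∈ succs e, (outdeg G e : ℝ)⁻¹ * Real.log (phi f) with hD
  have hway1 : D = ∑ e : G.Dart, (Real.log (phi e) + Real.log lam - Real.log (outdeg G e)) := by
    apply Finset.sum_congr rfl
    intro e _
    have hconst : ∀ f ∈ succs e, (outdeg G e : ℝ)⁻¹ * Real.log (phi f)
        = (outdeg G e : ℝ)⁻¹ * (Real.log (phi e) + Real.log lam - Real.log (outdeg G e)) :=
      fun f hf => by rw [hlog e f (Finset.mem_filter.mp hf).2]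
    rw [Finset.sum_congr rfl hconst, Finset.sum_const, card_succs, nsmul_eq_mul]
    have h := outdeg_cast_pos h2 e
    field_simp
  have hway2 : D = ∑ f : G.Dart, Real.log (phi f) := by
    rw [hD]
    have hsplit : ∀ e : G.Dart, ∑ f ∈ succs e, (outdeg G e : ℝ)⁻¹ * Real.log (phi f)
        = ∑ f : G.Dart, if Step G e f then (outdeg G e : ℝ)⁻¹ * Real.log (phi f) else 0 :=
      fun e => Finset.sum_filter _ _
    rw [Finset.sum_congr rfl (fun e _ => hsplit e), Finset.sum_comm]
    apply Finset.sum_congr rfl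
    intro f _
    rw [← Finset.sum_filter]
    have hod : ∀ e ∈ preds f, (outdeg G e : ℝ)⁻¹ * Real.log (phi f)
        = (indeg G f : ℝ)⁻¹ * Real.log (phi f) := by
      intro e he
      rw [outdeg_eq_indeg (Finset.mem_filter.mp he).2]
    have hpe : ∑ a ∈ Finset.filter (fun a => Step G a f) Finset.univ,
        (outdeg G a : ℝ)⁻¹ * Real.log (phi f)
        = ∑ a ∈ preds f, (indeg G f : ℝ)⁻¹ * Real.log (phi f) := Finset.sum_congr rfl hod
    rw [hpe, Finset.sum_const, card_preds, nsmul_eq_mul]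
    have hind : (0:ℝ) < (indeg G f : ℝ) := by
      have := h2 f.fst
      have : 0 < indeg G f := by unfold indeg; omega
      exact_mod_cast this
    field_simp
  have hsum : (Fintype.card G.Dart : ℝ) * Real.log lam = ∑ e : G.Dart, Real.log (outdeg G e) := by
    have hcomb := hway1.symm.trans hway2
    rw [Finset.sum_sub_distrib, Finset.sum_add_distrib, Finset.sum_const, Finset.card_univ,
      nsmul_eq_mul] at hcomb
    linarith
  have hprodpos : 0 < ∏ d : G.Dart, (outdeg G d : ℝ) :=
    Finset.prod_pos (fun d _ => outdeg_cast_pos h2 d)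
  have hlogL : Real.log (Lambda G) = (Fintype.card G.Dart : ℝ)⁻¹ *
      Real.log (∏ d : G.Dart, (outdeg G d : ℝ)) := Real.log_rpow hprodpos _
  rw [Real.log_prod (fun d _ => (outdeg_cast_pos h2 d).ne'), ← hsum] at hlogL
  have hcard' : (Fintype.card G.Dart : ℝ) ≠ 0 := by
    exact_mod_cast hcard.ne'
  rw [inv_mul_cancel_left₀ hcard'] at hlogL
  have hLpos : 0 < Lambda G := Real.rpow_pos_of_pos hprodpos _
  calc Lambda G = Real.exp (Real.log (Lambda G)) := (Real.exp_log hLpos).symm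
  _ = Real.exp (Real.log lam) := by rw [hlogL]
  _ = lam := Real.exp_log hlam

end Spectral

section Final

variable {G}

lemma rpow_nat_strip {A : ℝ} (hA : 0 ≤ A) {k : ℕ} (hk : k ≠ 0) :
    ((A ^ k : ℝ)) ^ (((k : ℝ))⁻¹) = A := by
  have hk' : (k : ℝ) ≠ 0 := Nat.cast_ne_zero.mpr hk
  rw [← Real.rpow_natCast A k, ← Real.rpow_mul hA, mul_inv_cancel₀ hk', Real.rpow_one]

lemma pow_nat_injective {A B : ℝ} (hA : 0 ≤ A) (hB : 0 ≤ B) {k : ℕ} (hk : k ≠ 0)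
    (h : A ^ k = B ^ k) : A = B := by
  calc A = ((A ^ k : ℝ)) ^ (((k : ℝ))⁻¹) := (rpow_nat_strip hA hk).symm
  _ = ((B ^ k : ℝ)) ^ (((k : ℝ))⁻¹) := by rw [h]
  _ = B := rpow_nat_strip hB hk

variable (G)

end Final

/-- If `ρ(G) > Λ(G)` there are two equal-length non-backtracking
cycles sharing a directed edge whose geometric-average out-degrees differ. -/
theorem exists_two_cycles (h : NBIrreducible G)
    (hgt : perron (B G) > Lambda G) :
    ∃ (n : ℕ) (C₁ C₂ : Fin (n + 1) → G.Dart),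
      IsNBCycle G C₁ ∧ IsNBCycle G C₂ ∧ (∃ i j : Fin (n + 1), C₁ i = C₂ j) ∧
      (∏ i : Fin (n + 1), (outdeg G (C₁ i) : ℝ)) ^ (((n : ℝ) + 1)⁻¹) <
        (∏ i : Fin (n + 1), (outdeg G (C₂ i) : ℝ)) ^ (((n : ℝ) + 1)⁻¹) := by
  obtain ⟨hc, h2, h3⟩ := h
  by_contra hcon
  push_neg at hcon
  have Heq : ∀ (n : ℕ) (C₁ C₂ : Fin (n + 1) → G.Dart), IsNBCycle G C₁ → IsNBCycle G C₂ →
      (∃ i j, C₁ i = C₂ j) →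
      (∏ i, (outdeg G (C₁ i) : ℝ)) = ∏ i, (outdeg G (C₂ i) : ℝ) := by
    intro n C₁ C₂ hC1 hC2 hsh
    obtain ⟨i, j, hij⟩ := hsh
    have ha := hcon n C₁ C₂ hC1 hC2 ⟨i, j, hij⟩
    have hb := hcon n C₂ C₁ hC2 hC1 ⟨j, i, hij.symm⟩
    have hrpow : (∏ i, (outdeg G (C₁ i) : ℝ)) ^ (((n : ℝ) + 1)⁻¹)
        = (∏ i, (outdeg G (C₂ i) : ℝ)) ^ (((n : ℝ) + 1)⁻¹) := le_antisymm hb ha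
    have h1 : (0:ℝ) ≤ ∏ i, (outdeg G (C₁ i) : ℝ) :=
      Finset.prod_nonneg (fun i _ => by positivity)
    have h2' : (0:ℝ) ≤ ∏ i, (outdeg G (C₂ i) : ℝ) :=
      Finset.prod_nonneg (fun i _ => by positivity)
    have hne : ((n : ℝ) + 1) ≠ 0 := by positivity
    have hstrip : ∀ A : ℝ, 0 ≤ A → ((A ^ (((n : ℝ) + 1)⁻¹)) ^ ((n : ℝ) + 1) : ℝ) = A := by
      intro A hA
      rw [← Real.rpow_mul hA, inv_mul_cancel₀ hne, Real.rpow_one]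
    calc (∏ i, (outdeg G (C₁ i) : ℝ))
        = (((∏ i, (outdeg G (C₁ i) : ℝ)) ^ (((n : ℝ) + 1)⁻¹)) ^ ((n : ℝ) + 1) : ℝ) :=
          (hstrip _ h1).symm
      _ = (((∏ i, (outdeg G (C₂ i) : ℝ)) ^ (((n : ℝ) + 1)⁻¹)) ^ ((n : ℝ) + 1) : ℝ) := by
          rw [hrpow]
      _ = ∏ i, (outdeg G (C₂ i) : ℝ) := hstrip _ h2'
  obtain ⟨e0⟩ := dart_nonempty h3
  obtain ⟨T0, hT0⟩ := isCyc_exists hc h2 h3 e0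
  have hP0 : 0 < Pr (e0 :: T0) := Pr_pos h2 _
  set lam : ℝ := Pr (e0 :: T0) ^ ((((T0.length + 1 : ℕ) : ℝ))⁻¹) with hlamdef
  have hlam : 0 < lam := Real.rpow_pos_of_pos hP0 _
  have hlampow : lam ^ (T0.length + 1) = Pr (e0 :: T0) := by
    rw [hlamdef, ← Real.rpow_natCast (Pr (e0 :: T0) ^ ((((T0.length + 1 : ℕ) : ℝ))⁻¹)),
      ← Real.rpow_mul hP0.le, inv_mul_cancel₀ (Nat.cast_ne_zero.mpr (Nat.succ_ne_zero _)),
      Real.rpow_one]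
  have hcyc : ∀ (x : G.Dart) (T : List G.Dart), IsCyc x T →
      Pr (x :: T) = lam ^ (T.length + 1) := by
    intro x T hxT
    have hkey := cycle_pow_eq hc h2 h3 Heq hxT hT0
    have hA : 0 ≤ Pr (x :: T) := (Pr_pos h2 _).le
    have hB : 0 ≤ lam ^ (T.length + 1) := by positivity
    refine pow_nat_injective hA hB (Nat.succ_ne_zero T0.length) ?_
    rw [hkey, ← pow_mul, mul_comm, pow_mul, hlampow]
  obtain ⟨phi, hppos, hpstep⟩ := exists_phi hc h2 h3 hlam hcyc
  have hLam : Lambda G = lam := lambda_eq h2 h3 hlam hppos hpstep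
  have hperron : perron (B G) ≤ lam := by
    apply Real.sSup_le
    · rintro x ⟨v, hv, heig⟩
      exact eigen_le h2 hlam hppos hpstep hv heig
    · exact hlam.le
  rw [hLam] at hgt
  exact absurd hgt (not_lt.mpr hperron)


end NB
end

section
/- Let G be the graph K₄ minus an edge (the complete graph on four vertices with one edge removed), and let R_ℓ(ω)=∑_{i=0}^{ℓ−1} log₂ outdeg(e_i) for ω=(e_0,…,e_ℓ)∈Ω_ℓ, with variance taken over the NBRW measure μ started from the uniform stationary distribution on the 10 directed edges. Then lim_{ℓ→∞} Var[R_ℓ]/ℓ = 2/125. -/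
open Finset Filter

namespace NB

variable {V : Type} [Fintype V] [DecidableEq V] (G : SimpleGraph V) [DecidableRel G.Adj]

set_option linter.unusedSectionVars false

/-! ### Auxiliary general machinery for non-backtracking walks -/

section GeneralAux

def lst {ℓ : ℕ} (ω : NBWalk G ℓ) : G.Dart := ω.1 (Fin.last ℓ)

def initWalk {ℓ : ℕ} (ω : NBWalk G (ℓ + 1)) : NBWalk G ℓ :=
  ⟨fun i => ω.1 i.castSucc, fun i => by
    have h := ω.2 i.castSucc
    rwa [Fin.succ_castSucc] at h⟩

lemma step_lst_initWalk {ℓ : ℕ} (ω : NBWalk G (ℓ + 1)) :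
    Step G (lst G (initWalk G ω)) (ω.1 (Fin.last (ℓ + 1))) := by
  have h := ω.2 (Fin.last ℓ)
  rwa [Fin.succ_last] at h

def snocWalk {ℓ : ℕ} (ω : NBWalk G ℓ) (e : G.Dart) (h : Step G (lst G ω) e) :
    NBWalk G (ℓ + 1) :=
  ⟨Fin.snoc ω.1 e, by
    intro i
    induction i using Fin.lastCases with
    | last =>
        rw [Fin.succ_last]
        simp only [Fin.snoc_castSucc, Fin.snoc_last]
        exact h
    | cast j =>
        rw [Fin.succ_castSucc]
        simp only [Fin.snoc_castSucc]
        exact ω.2 j⟩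

lemma initWalk_snocWalk {ℓ : ℕ} (ω : NBWalk G ℓ) (e : G.Dart) (h : Step G (lst G ω) e) :
    initWalk G (snocWalk G ω e h) = ω := by
  apply Subtype.ext
  funext i
  simp [initWalk, snocWalk]

lemma lst_snocWalk {ℓ : ℕ} (ω : NBWalk G ℓ) (e : G.Dart) (h : Step G (lst G ω) e) :
    lst G (snocWalk G ω e h) = e := by
  simp [lst, snocWalk]

lemma snocWalk_initWalk {ℓ : ℕ} (ω : NBWalk G (ℓ + 1)) (h) :
    snocWalk G (initWalk G ω) (ω.1 (Fin.last (ℓ + 1))) h = ω := by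
  apply Subtype.ext
  funext i
  induction i using Fin.lastCases with
  | last => simp [snocWalk, Fin.snoc_last]
  | cast j => simp [snocWalk, initWalk, Fin.snoc_castSucc]

lemma sum_snoc {ℓ : ℕ} (H : NBWalk G (ℓ + 1) → ℝ) :
    ∑ ω' : NBWalk G (ℓ + 1), H ω' =
    ∑ ω : NBWalk G ℓ, ∑ e : G.Dart,
      if h : Step G (lst G ω) e then H (snocWalk G ω e h) else 0 := by
  classical
  set ι : NBWalk G (ℓ + 1) → NBWalk G ℓ × G.Dart :=
    fun ω' => (initWalk G ω', ω'.1 (Fin.last (ℓ + 1))) with hι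
  have hinj : ∀ a ∈ (univ : Finset (NBWalk G (ℓ+1))), ∀ b ∈ univ, ι a = ι b → a = b := by
    intro a _ b _ hab
    have h1 : initWalk G a = initWalk G b := congrArg Prod.fst hab
    have h2 : a.1 (Fin.last (ℓ+1)) = b.1 (Fin.last (ℓ+1)) := congrArg Prod.snd hab
    apply Subtype.ext
    funext i
    induction i using Fin.lastCases with
    | last => exact h2
    | cast j => exact congrArg (fun w => w.1 j) h1
  set F : NBWalk G ℓ × G.Dart → ℝ :=
    fun p => if h : Step G (lst G p.1) p.2 then H (snocWalk G p.1 p.2 h) else 0 with hF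
  have key : ∑ p : NBWalk G ℓ × G.Dart, F p = ∑ ω' : NBWalk G (ℓ+1), H ω' := by
    rw [← Finset.sum_subset (Finset.subset_univ ((univ : Finset (NBWalk G (ℓ+1))).image ι))]
    · rw [Finset.sum_image hinj]
      refine Finset.sum_congr rfl fun ω' _ => ?_
      have hs := step_lst_initWalk G ω'
      simp only [hF, hι]
      rw [dif_pos hs, snocWalk_initWalk]
    · intro p _ hp
      by_cases h : Step G (lst G p.1) p.2
      · exfalso
        apply hp
        refine Finset.mem_image.2 ⟨snocWalk G p.1 p.2 h, Finset.mem_univ _, ?_⟩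
        simp only [hι]
        rw [Prod.ext_iff]
        exact ⟨initWalk_snocWalk G p.1 p.2 h, by
          have := lst_snocWalk G p.1 p.2 h
          simpa [lst] using this⟩
      · simp only [hF]
        rw [dif_neg h]
  rw [← key, Fintype.sum_prod_type]

lemma mu_snocWalk {ℓ : ℕ} (ω : NBWalk G ℓ) (e : G.Dart) (h : Step G (lst G ω) e) :
    mu G (snocWalk G ω e h) = mu G ω * ((outdeg G (lst G ω) : ℝ))⁻¹ := by
  unfold mu
  rw [Fin.prod_univ_castSucc]
  simp only [snocWalk, Fin.snoc_castSucc, lst]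
  ring

lemma bits_snocWalk {ℓ : ℕ} (ω : NBWalk G ℓ) (e : G.Dart) (h : Step G (lst G ω) e) :
    bits G (snocWalk G ω e h) = bits G ω + Real.logb 2 (outdeg G (lst G ω)) := by
  unfold bits
  rw [Fin.sum_univ_castSucc]
  simp only [snocWalk, Fin.snoc_castSucc, lst]

lemma expect_succ {ℓ : ℕ} (Φ : ℝ → G.Dart → ℝ) :
    expect G (fun ω' : NBWalk G (ℓ + 1) => Φ (bits G ω') (lst G ω')) =
    expect G (fun ω : NBWalk G ℓ =>
      ((outdeg G (lst G ω) : ℝ))⁻¹ *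
      ∑ e ∈ univ.filter (fun e => Step G (lst G ω) e),
        Φ (bits G ω + Real.logb 2 (outdeg G (lst G ω))) e) := by
  unfold expect
  rw [sum_snoc G (fun ω' => mu G ω' * Φ (bits G ω') (lst G ω'))]
  refine Finset.sum_congr rfl fun ω _ => ?_
  have hpt : ∀ e : G.Dart,
      (if h : Step G (lst G ω) e then
        mu G (snocWalk G ω e h) * Φ (bits G (snocWalk G ω e h)) (lst G (snocWalk G ω e h))
      else 0) =
      if Step G (lst G ω) e then
        mu G ω * (((outdeg G (lst G ω) : ℝ))⁻¹ *
          Φ (bits G ω + Real.logb 2 (outdeg G (lst G ω))) e)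
      else 0 := by
    intro e
    by_cases h : Step G (lst G ω) e
    · rw [dif_pos h, if_pos h, mu_snocWalk, bits_snocWalk, lst_snocWalk]
      ring
    · rw [dif_neg h, if_neg h]
  rw [Finset.sum_congr rfl fun e _ => hpt e, ← Finset.sum_filter, ← Finset.mul_sum,
    ← Finset.mul_sum]

lemma sum_lst_zero (ψ : G.Dart → ℝ) :
    ∑ ω : NBWalk G 0, ψ (lst G ω) = ∑ d : G.Dart, ψ d := by
  apply Fintype.sum_bijective (lst G) ?_ _ _ (fun ω => rfl)
  constructor
  · intro a b hab
    apply Subtype.ext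
    funext i
    have hi : i = Fin.last 0 := Fin.ext (by omega)
    rw [hi]
    exact hab
  · intro d
    exact ⟨⟨fun _ => d, fun i => i.elim0⟩, rfl⟩

lemma expect_sq_sub {ℓ : ℕ} (X : NBWalk G ℓ → ℝ) (c : ℝ) :
    expect G (fun ω => (X ω - c) ^ 2) =
      expect G (fun ω => X ω ^ 2) - 2 * c * expect G X
        + c ^ 2 * expect G (fun _ : NBWalk G ℓ => (1:ℝ)) := by
  unfold expect
  rw [Finset.mul_sum, Finset.mul_sum, ← Finset.sum_sub_distrib, ← Finset.sum_add_distrib]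
  exact Finset.sum_congr rfl fun ω _ => by ring

end GeneralAux


/-- The graph `K₄` minus an edge: vertices `0,1,2,3` (with `0,1` playing the role of
`u₁,u₂` and `2,3` of `v₁,v₂`), all edges present except the edge `{2,3}`. -/
def K4MinusEdge : SimpleGraph (Fin 4) where
  Adj v w := v ≠ w ∧ ¬(v = 2 ∧ w = 3) ∧ ¬(v = 3 ∧ w = 2)
  symm := by
    constructor
    rintro v w ⟨h1, h2, h3⟩
    exact ⟨h1.symm, fun hc => h3 ⟨hc.2, hc.1⟩, fun hc => h2 ⟨hc.2, hc.1⟩⟩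
  loopless := ⟨fun v h => h.1 rfl⟩

instance : DecidableRel K4MinusEdge.Adj := fun v w =>
  inferInstanceAs (Decidable (v ≠ w ∧ ¬(v = 2 ∧ w = 3) ∧ ¬(v = 3 ∧ w = 2)))


/-! ### Class structure on the darts of `K₄` minus an edge -/

def Ub (v : Fin 4) : Bool := decide (v = 0 ∨ v = 1)
def Ab (d : K4MinusEdge.Dart) : Bool := Ub d.toProd.1 && Ub d.toProd.2
def Bb (d : K4MinusEdge.Dart) : Bool := Ub d.toProd.1 && !Ub d.toProd.2
def Cb (d : K4MinusEdge.Dart) : Bool := !Ab d && !Bb d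

noncomputable def cls (x y z : ℝ) (d : K4MinusEdge.Dart) : ℝ :=
  if Ab d then x else if Bb d then y else z

lemma cardDart : Fintype.card K4MinusEdge.Dart = 10 := by decide

lemma classCards :
    ((univ : Finset K4MinusEdge.Dart).filter (fun d => Ab d = true)).card = 2 ∧
    ((univ : Finset K4MinusEdge.Dart).filter (fun d => Bb d = true)).card = 4 ∧
    ((univ : Finset K4MinusEdge.Dart).filter (fun d => Cb d = true)).card = 4 := by decide

lemma succCount : ∀ d : K4MinusEdge.Dart,
    ((univ : Finset K4MinusEdge.Dart).filter (fun e => Step K4MinusEdge d e)).card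
      = outdeg K4MinusEdge d := by decide

lemma outdeg_ne_zero : ∀ d : K4MinusEdge.Dart, outdeg K4MinusEdge d ≠ 0 := by decide

lemma succA : ∀ d : K4MinusEdge.Dart, Ab d = true →
    outdeg K4MinusEdge d = 2 ∧
    (((univ : Finset K4MinusEdge.Dart).filter (fun e => Step K4MinusEdge d e)).filter
      (fun e => Ab e = true)).card = 0 ∧
    (((univ : Finset K4MinusEdge.Dart).filter (fun e => Step K4MinusEdge d e)).filter
      (fun e => Bb e = true)).card = 2 ∧
    (((univ : Finset K4MinusEdge.Dart).filter (fun e => Step K4MinusEdge d e)).filter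
      (fun e => Cb e = true)).card = 0 := by decide

lemma succB : ∀ d : K4MinusEdge.Dart, Bb d = true →
    outdeg K4MinusEdge d = 1 ∧
    (((univ : Finset K4MinusEdge.Dart).filter (fun e => Step K4MinusEdge d e)).filter
      (fun e => Ab e = true)).card = 0 ∧
    (((univ : Finset K4MinusEdge.Dart).filter (fun e => Step K4MinusEdge d e)).filter
      (fun e => Bb e = true)).card = 0 ∧
    (((univ : Finset K4MinusEdge.Dart).filter (fun e => Step K4MinusEdge d e)).filter
      (fun e => Cb e = true)).card = 1 := by decide

lemma succC : ∀ d : K4MinusEdge.Dart, Cb d = true →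
    outdeg K4MinusEdge d = 2 ∧
    (((univ : Finset K4MinusEdge.Dart).filter (fun e => Step K4MinusEdge d e)).filter
      (fun e => Ab e = true)).card = 1 ∧
    (((univ : Finset K4MinusEdge.Dart).filter (fun e => Step K4MinusEdge d e)).filter
      (fun e => Bb e = true)).card = 1 ∧
    (((univ : Finset K4MinusEdge.Dart).filter (fun e => Step K4MinusEdge d e)).filter
      (fun e => Cb e = true)).card = 0 := by decide

lemma sum_cls (s : Finset K4MinusEdge.Dart) (x y z : ℝ) :
    ∑ e ∈ s, cls x y z e =
      x * (s.filter (fun e => Ab e = true)).card +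
      y * (s.filter (fun e => Bb e = true)).card +
      z * (s.filter (fun e => Cb e = true)).card := by
  have hexcl : ∀ d : K4MinusEdge.Dart, ¬(Ab d = true ∧ Bb d = true) := by decide
  have hpt : ∀ e : K4MinusEdge.Dart, cls x y z e =
      x * (if Ab e = true then (1:ℝ) else 0) + y * (if Bb e = true then (1:ℝ) else 0) +
      z * (if Cb e = true then (1:ℝ) else 0) := by
    intro e
    unfold cls Cb
    cases hA : Ab e <;> cases hB : Bb e <;> simp
    exact absurd ⟨hA, hB⟩ (hexcl e)
  rw [Finset.sum_congr rfl fun e _ => hpt e]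
  rw [Finset.sum_add_distrib, Finset.sum_add_distrib, ← Finset.mul_sum, ← Finset.mul_sum,
    ← Finset.mul_sum, Finset.sum_boole, Finset.sum_boole, Finset.sum_boole]

lemma T_cls (x y z : ℝ) (d : K4MinusEdge.Dart) :
    ((outdeg K4MinusEdge d : ℝ))⁻¹ *
      ∑ e ∈ univ.filter (fun e => Step K4MinusEdge d e), cls x y z e =
    cls y z ((x + y) / 2) d := by
  rw [sum_cls]
  unfold cls
  rcases hA : Ab d with _ | _
  · rcases hB : Bb d with _ | _
    · have hC : Cb d = true := by unfold Cb; rw [hA, hB]; rfl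
      obtain ⟨h1, h2, h3, h4⟩ := succC d hC
      rw [h1, h2, h3, h4]; norm_num; ring
    · obtain ⟨h1, h2, h3, h4⟩ := succB d hB
      rw [h1, h2, h3, h4]; norm_num
  · obtain ⟨h1, h2, h3, h4⟩ := succA d hA
    rw [h1, h2, h3, h4]; norm_num; ring

lemma f_eq_cls (d : K4MinusEdge.Dart) :
    Real.logb 2 (outdeg K4MinusEdge d) = cls 1 0 1 d := by
  unfold cls
  rcases hA : Ab d with _ | _
  · rcases hB : Bb d with _ | _
    · have hC : Cb d = true := by unfold Cb; rw [hA, hB]; rfl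
      rw [(succC d hC).1]
      simp
    · rw [(succB d hB).1]
      simp
  · rw [(succA d hA).1]
    simp

lemma cls_mul (a b c x y z : ℝ) (d : K4MinusEdge.Dart) :
    cls a b c d * cls x y z d = cls (a*x) (b*y) (c*z) d := by
  unfold cls; split_ifs <;> ring

lemma cls_lin (x y z : ℝ) (d : K4MinusEdge.Dart) :
    cls x y z d = x * cls 1 0 0 d + y * cls 0 1 0 d + z * cls 0 0 1 d := by
  unfold cls; split_ifs <;> ring

lemma cls_one (d : K4MinusEdge.Dart) : cls 1 1 1 d = 1 := by
  unfold cls; split_ifs <;> rfl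

/-! ### The functionals `Nk`, `Wk`, `Vk` and their recursions -/

noncomputable def Wk (ℓ : ℕ) (x y z : ℝ) : ℝ :=
  expect K4MinusEdge
    (fun ω : NBWalk K4MinusEdge ℓ => bits K4MinusEdge ω * cls x y z (lst K4MinusEdge ω))

noncomputable def Nk (ℓ : ℕ) (x y z : ℝ) : ℝ :=
  expect K4MinusEdge (fun ω : NBWalk K4MinusEdge ℓ => cls x y z (lst K4MinusEdge ω))

noncomputable def Vk (ℓ : ℕ) : ℝ :=
  expect K4MinusEdge (fun ω : NBWalk K4MinusEdge ℓ => bits K4MinusEdge ω ^ 2)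

lemma Nk_succ (ℓ : ℕ) (x y z : ℝ) : Nk (ℓ + 1) x y z = Nk ℓ y z ((x + y) / 2) := by
  have h : expect K4MinusEdge
      (fun ω' : NBWalk K4MinusEdge (ℓ + 1) => cls x y z (lst K4MinusEdge ω')) =
      expect K4MinusEdge (fun ω : NBWalk K4MinusEdge ℓ =>
        ((outdeg K4MinusEdge (lst K4MinusEdge ω) : ℝ))⁻¹ *
        ∑ e ∈ univ.filter (fun e => Step K4MinusEdge (lst K4MinusEdge ω) e), cls x y z e) :=
    expect_succ K4MinusEdge (fun _ d => cls x y z d)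
  unfold Nk
  rw [h]
  unfold expect
  beta_reduce
  exact Finset.sum_congr rfl fun ω _ => by rw [T_cls]

lemma Wk_succ (ℓ : ℕ) (x y z : ℝ) :
    Wk (ℓ + 1) x y z = Wk ℓ y z ((x + y) / 2) + Nk ℓ y 0 ((x + y) / 2) := by
  have h : expect K4MinusEdge
      (fun ω' : NBWalk K4MinusEdge (ℓ + 1) =>
        bits K4MinusEdge ω' * cls x y z (lst K4MinusEdge ω')) =
      expect K4MinusEdge (fun ω : NBWalk K4MinusEdge ℓ =>
        ((outdeg K4MinusEdge (lst K4MinusEdge ω) : ℝ))⁻¹ *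
        ∑ e ∈ univ.filter (fun e => Step K4MinusEdge (lst K4MinusEdge ω) e),
          (bits K4MinusEdge ω +
            Real.logb 2 (outdeg K4MinusEdge (lst K4MinusEdge ω))) * cls x y z e) :=
    expect_succ K4MinusEdge (fun r d => r * cls x y z d)
  unfold Wk Nk
  rw [h]
  unfold expect
  beta_reduce
  rw [← Finset.sum_add_distrib]
  refine Finset.sum_congr rfl fun ω _ => ?_
  rw [← Finset.mul_sum]
  have hT := T_cls x y z (lst K4MinusEdge ω)
  have hf := f_eq_cls (lst K4MinusEdge ω)
  have hm := cls_mul 1 0 1 y z ((x + y) / 2) (lst K4MinusEdge ω)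
  simp only [one_mul, zero_mul] at hm
  rw [hf, ← hm, ← hT]
  ring

lemma Vk_succ (ℓ : ℕ) : Vk (ℓ + 1) = Vk ℓ + 2 * Wk ℓ 1 0 1 + Nk ℓ 1 0 1 := by
  have h : expect K4MinusEdge
      (fun ω' : NBWalk K4MinusEdge (ℓ + 1) => bits K4MinusEdge ω' ^ 2) =
      expect K4MinusEdge (fun ω : NBWalk K4MinusEdge ℓ =>
        ((outdeg K4MinusEdge (lst K4MinusEdge ω) : ℝ))⁻¹ *
        ∑ e ∈ univ.filter (fun e => Step K4MinusEdge (lst K4MinusEdge ω) e),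
          (bits K4MinusEdge ω +
            Real.logb 2 (outdeg K4MinusEdge (lst K4MinusEdge ω))) ^ 2) :=
    expect_succ K4MinusEdge (fun r _ => r ^ 2)
  unfold Vk Wk Nk
  rw [h]
  unfold expect
  beta_reduce
  rw [Finset.mul_sum, ← Finset.sum_add_distrib, ← Finset.sum_add_distrib]
  refine Finset.sum_congr rfl fun ω _ => ?_
  rw [Finset.sum_const, nsmul_eq_mul, succCount]
  have hne : ((outdeg K4MinusEdge (lst K4MinusEdge ω) : ℝ)) ≠ 0 := by
    exact_mod_cast outdeg_ne_zero (lst K4MinusEdge ω)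
  have hf := f_eq_cls (lst K4MinusEdge ω)
  have hm := cls_mul 1 0 1 1 0 1 (lst K4MinusEdge ω)
  simp only [one_mul, zero_mul] at hm
  rw [hf]
  have h1 : ((outdeg K4MinusEdge (lst K4MinusEdge ω) : ℝ))⁻¹ *
      (outdeg K4MinusEdge (lst K4MinusEdge ω) : ℝ) = 1 := inv_mul_cancel₀ hne
  linear_combination (mu K4MinusEdge ω *
      (bits K4MinusEdge ω + cls 1 0 1 (lst K4MinusEdge ω)) ^ 2) * h1 +
    mu K4MinusEdge ω * hm

lemma bits_zero (ω : NBWalk K4MinusEdge 0) : bits K4MinusEdge ω = 0 := by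
  simp [bits]

lemma Wk_zero (x y z : ℝ) : Wk 0 x y z = 0 := by
  unfold Wk expect
  beta_reduce
  refine Finset.sum_eq_zero fun ω _ => ?_
  rw [bits_zero]
  ring

lemma Vk_zero : Vk 0 = 0 := by
  unfold Vk expect
  beta_reduce
  refine Finset.sum_eq_zero fun ω _ => ?_
  rw [bits_zero]
  ring

lemma Nk_zero (x y z : ℝ) : Nk 0 x y z = (2 * x + 4 * y + 4 * z) / 10 := by
  unfold Nk expect
  beta_reduce
  have hmu : ∀ ω : NBWalk K4MinusEdge 0, mu K4MinusEdge ω = (10 : ℝ)⁻¹ := by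
    intro ω
    unfold mu
    rw [cardDart]
    simp
  rw [Finset.sum_congr rfl fun ω _ => by rw [hmu ω]]
  rw [← Finset.mul_sum, sum_lst_zero K4MinusEdge (cls x y z), sum_cls,
    classCards.1, classCards.2.1, classCards.2.2]
  norm_num
  ring

lemma Nk_const (ℓ : ℕ) : ∀ x y z : ℝ, Nk ℓ x y z = (2 * x + 4 * y + 4 * z) / 10 := by
  induction ℓ with
  | zero => exact Nk_zero
  | succ ℓ IH =>
      intro x y z
      rw [Nk_succ, IH]
      ring

lemma Wk_lin (ℓ : ℕ) (x y z : ℝ) :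
    Wk ℓ x y z = x * Wk ℓ 1 0 0 + y * Wk ℓ 0 1 0 + z * Wk ℓ 0 0 1 := by
  unfold Wk expect
  beta_reduce
  rw [Finset.mul_sum, Finset.mul_sum, Finset.mul_sum, ← Finset.sum_add_distrib,
    ← Finset.sum_add_distrib]
  refine Finset.sum_congr rfl fun ω _ => ?_
  rw [cls_lin]
  ring

/-! ### The explicit solution sequences -/

noncomputable def useq : ℕ → ℝ × ℝ
  | 0 => (-2/125, 8/125)
  | n + 1 => ((useq n).2, -(useq n).2 - (useq n).1 / 2)

noncomputable def u (n : ℕ) : ℝ := (useq n).1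

lemma u_rec (n : ℕ) : u (n + 2) = -u (n + 1) - u n / 2 := by
  simp [u, useq]

noncomputable def Sq : ℕ → ℝ
  | 0 => 0
  | n + 1 => Sq n + 2 * (u n + 2 * u (n + 1))

lemma closed_form (ℓ : ℕ) :
    Wk ℓ 1 0 0 = 3/25 * ℓ + 2/125 + u ℓ ∧
    Wk ℓ 0 1 0 = 6/25 * ℓ + 14/125 + 2 * u (ℓ + 2) ∧
    Wk ℓ 0 0 1 = 6/25 * ℓ - 16/125 + 2 * u (ℓ + 1) ∧
    Vk ℓ = 9/25 * (ℓ : ℝ) ^ 2 + 2/125 * ℓ + Sq ℓ := by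
  induction ℓ with
  | zero =>
      refine ⟨?_, ?_, ?_, ?_⟩ <;>
        norm_num [Wk_zero, Vk_zero, u, useq, Sq]
  | succ ℓ IH =>
      obtain ⟨hα, hβ, hγ, hV⟩ := IH
      have hu3 : 2 * u (ℓ + 3) = u ℓ + u (ℓ + 1) := by
        rw [u_rec (ℓ + 1), u_rec ℓ]
        ring
      refine ⟨?_, ?_, ?_, ?_⟩
      · rw [Wk_succ, Wk_lin, Nk_const, hα, hβ, hγ]
        push_cast
        ring
      · show Wk (ℓ + 1) 0 1 0 = 6/25 * ((ℓ + 1 : ℕ) : ℝ) + 14/125 + 2 * u (ℓ + 3)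
        rw [Wk_succ, Wk_lin, Nk_const, hα, hβ, hγ, hu3]
        push_cast
        ring
      · show Wk (ℓ + 1) 0 0 1 = 6/25 * ((ℓ + 1 : ℕ) : ℝ) - 16/125 + 2 * u (ℓ + 2)
        rw [Wk_succ, Wk_lin, Nk_const, hα, hβ, hγ]
        rw [u_rec ℓ]
        push_cast
        ring
      · show Vk (ℓ + 1) = 9/25 * ((ℓ + 1 : ℕ) : ℝ) ^ 2 + 2/125 * ((ℓ + 1 : ℕ) : ℝ)
          + (Sq ℓ + 2 * (u ℓ + 2 * u (ℓ + 1)))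
        rw [Vk_succ, Wk_lin, Nk_const, hα, hβ, hγ, hV]
        push_cast
        ring

lemma expect_bits (ℓ : ℕ) :
    expect K4MinusEdge (fun ω : NBWalk K4MinusEdge ℓ => bits K4MinusEdge ω) = 3/5 * ℓ := by
  have h : expect K4MinusEdge (fun ω : NBWalk K4MinusEdge ℓ => bits K4MinusEdge ω)
      = Wk ℓ 1 1 1 := by
    unfold Wk expect
    beta_reduce
    exact Finset.sum_congr rfl fun ω _ => by rw [cls_one, mul_one]
  rw [h, Wk_lin, (closed_form ℓ).1, (closed_form ℓ).2.1, (closed_form ℓ).2.2.1, u_rec ℓ]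
  ring

lemma expect_one (ℓ : ℕ) :
    expect K4MinusEdge (fun _ : NBWalk K4MinusEdge ℓ => (1 : ℝ)) = 1 := by
  have h : expect K4MinusEdge (fun _ : NBWalk K4MinusEdge ℓ => (1 : ℝ))
      = Nk ℓ 1 1 1 := by
    unfold Nk expect
    beta_reduce
    exact Finset.sum_congr rfl fun ω _ => by rw [cls_one]
  rw [h, Nk_const]
  norm_num

lemma var_bits (ℓ : ℕ) :
    var K4MinusEdge (fun ω : NBWalk K4MinusEdge ℓ => bits K4MinusEdge ω)
      = 2/125 * ℓ + Sq ℓ := by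
  unfold var
  rw [expect_bits]
  have h := expect_sq_sub K4MinusEdge
    (fun ω : NBWalk K4MinusEdge ℓ => bits K4MinusEdge ω) (3/5 * ℓ)
  beta_reduce at h
  rw [h, expect_bits, expect_one]
  have hV : expect K4MinusEdge (fun ω : NBWalk K4MinusEdge ℓ => bits K4MinusEdge ω ^ 2)
      = 9/25 * (ℓ : ℝ) ^ 2 + 2/125 * ℓ + Sq ℓ := (closed_form ℓ).2.2.2
  rw [hV]
  ring

/-! ### Decay of the transient part -/

noncomputable def Lf (n : ℕ) : ℝ := u n ^ 2 + 2 * u n * u (n + 1) + 2 * u (n + 1) ^ 2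

lemma Lf_succ (n : ℕ) : Lf (n + 1) = Lf n / 2 := by
  unfold Lf
  rw [u_rec]
  ring

lemma Lf_eq (n : ℕ) : Lf n = 4/625 * (1/2) ^ n := by
  induction n with
  | zero => norm_num [Lf, u, useq]
  | succ n IH => rw [Lf_succ, IH]; ring

lemma u_sq_le (n : ℕ) : u n ^ 2 ≤ 8/625 * (1/2) ^ n := by
  have h2 : u n ^ 2 ≤ 2 * Lf n := by
    unfold Lf
    nlinarith [sq_nonneg (u n + 2 * u (n + 1))]
  rw [Lf_eq] at h2
  linarith

lemma u_abs_le (n : ℕ) : |u n| ≤ 1/5 * ((Real.sqrt 2)⁻¹) ^ n := by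
  set w : ℝ := (Real.sqrt 2)⁻¹ with hw
  have h2 : Real.sqrt 2 ^ 2 = 2 := Real.sq_sqrt (by norm_num)
  have hs : (0:ℝ) < Real.sqrt 2 := Real.sqrt_pos.2 (by norm_num)
  have hw2 : w ^ 2 = 1/2 := by
    rw [hw, inv_pow, h2]
    norm_num
  have hwn : (0:ℝ) ≤ w := by positivity
  have hpow : (1/5 * w ^ n) ^ 2 = 1/25 * (1/2) ^ n := by
    rw [mul_pow, ← pow_mul, mul_comm n 2, pow_mul, hw2]
    ring
  have hle : u n ^ 2 ≤ (1/5 * w ^ n) ^ 2 := by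
    rw [hpow]
    have := u_sq_le n
    have hp : (0:ℝ) ≤ (1/2) ^ n := by positivity
    nlinarith
  calc |u n| = Real.sqrt (u n ^ 2) := (Real.sqrt_sq_eq_abs _).symm
    _ ≤ Real.sqrt ((1/5 * w ^ n) ^ 2) := Real.sqrt_le_sqrt hle
    _ = 1/5 * w ^ n := Real.sqrt_sq (by positivity)

lemma w_lt_one : (Real.sqrt 2)⁻¹ < 1 := by
  have hs : (1:ℝ) < Real.sqrt 2 := by
    nlinarith [Real.sq_sqrt (show (0:ℝ) ≤ 2 by norm_num), Real.sqrt_nonneg 2]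
  rw [inv_lt_one_iff₀]
  right
  exact hs

lemma Sq_abs_le (ℓ : ℕ) :
    |Sq ℓ| ≤ 6/5 * ∑ k ∈ Finset.range ℓ, ((Real.sqrt 2)⁻¹) ^ k := by
  set w : ℝ := (Real.sqrt 2)⁻¹ with hw
  have hwn : (0:ℝ) ≤ w := by positivity
  have hw1 : w ≤ 1 := le_of_lt w_lt_one
  induction ℓ with
  | zero => simp [Sq]
  | succ ℓ IH =>
      have hstep : |Sq (ℓ + 1)| ≤ |Sq ℓ| + 2 * |u ℓ| + 4 * |u (ℓ + 1)| := by
        have h1 : Sq (ℓ + 1) = Sq ℓ + (2 * u ℓ + 4 * u (ℓ + 1)) := by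
          show Sq ℓ + 2 * (u ℓ + 2 * u (ℓ + 1)) = _
          ring
        rw [h1]
        calc |Sq ℓ + (2 * u ℓ + 4 * u (ℓ + 1))|
            ≤ |Sq ℓ| + |2 * u ℓ + 4 * u (ℓ + 1)| := abs_add_le _ _
          _ ≤ |Sq ℓ| + (|2 * u ℓ| + |4 * u (ℓ + 1)|) := by
              have := abs_add_le (2 * u ℓ) (4 * u (ℓ + 1))
              linarith
          _ = |Sq ℓ| + 2 * |u ℓ| + 4 * |u (ℓ + 1)| := by
              rw [abs_mul, abs_mul]
              norm_num
              try ring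
      have h2 : 2 * |u ℓ| + 4 * |u (ℓ + 1)| ≤ 6/5 * w ^ ℓ := by
        have b1 := u_abs_le ℓ
        have b2 := u_abs_le (ℓ + 1)
        have hww : w ^ (ℓ + 1) ≤ w ^ ℓ := by
          rw [pow_succ]
          nlinarith [pow_nonneg hwn ℓ]
        rw [← hw] at b1 b2
        nlinarith
      rw [Finset.sum_range_succ]
      have := IH
      nlinarith

lemma Sq_bounded (ℓ : ℕ) : |Sq ℓ| ≤ 6/5 * (1 - (Real.sqrt 2)⁻¹)⁻¹ := by
  set w : ℝ := (Real.sqrt 2)⁻¹ with hw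
  have hwn : (0:ℝ) ≤ w := by positivity
  have hw1 : w < 1 := w_lt_one
  have hgeom : ∑ k ∈ Finset.range ℓ, w ^ k ≤ (1 - w)⁻¹ := by
    have h0 : (0:ℝ) < 1 - w := by linarith
    have hp0 : (0:ℝ) ≤ w ^ ℓ := pow_nonneg hwn ℓ
    have hinv : (0:ℝ) ≤ (1 - w)⁻¹ := by positivity
    rw [geom_sum_eq (by linarith : w ≠ 1)]
    have heq : (w ^ ℓ - 1) / (w - 1) = (1 - w ^ ℓ) / (1 - w) := by
      rw [div_eq_div_iff (by linarith) (by linarith)]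
      ring
    rw [heq, div_le_iff₀ h0, inv_mul_cancel₀ (by linarith : (1:ℝ) - w ≠ 0)]
    linarith
  have h := Sq_abs_le ℓ
  calc |Sq ℓ| ≤ 6/5 * ∑ k ∈ Finset.range ℓ, w ^ k := h
    _ ≤ 6/5 * (1 - w)⁻¹ := by linarith

/-- For `K₄` minus an edge, the normalized variance of the number of
random bits consumed by the length-`ℓ` NBRW converges: `lim Var[R_ℓ]/ℓ = 2/125`. -/
theorem K4MinusEdge_variance_limit :
    Tendsto
      (fun ℓ : ℕ =>
        var K4MinusEdge (fun ω : NBWalk K4MinusEdge ℓ => bits K4MinusEdge ω) / (ℓ : ℝ))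
      atTop (nhds (2 / 125)) := by
  have key : Tendsto (fun ℓ : ℕ => Sq ℓ / ℓ) atTop (nhds 0) := by
    apply squeeze_zero_norm (a := fun n : ℕ => (6/5 * (1 - (Real.sqrt 2)⁻¹)⁻¹) / n) ?_
      (tendsto_const_div_atTop_nhds_zero_nat _)
    intro n
    rcases Nat.eq_zero_or_pos n with h | h
    · subst h; simp
    · have hn : (0:ℝ) < n := by exact_mod_cast h
      rw [Real.norm_eq_abs, abs_div, abs_of_pos hn]
      exact (div_le_div_iff_of_pos_right hn).2 (Sq_bounded n)
  have heq : ∀ᶠ ℓ : ℕ in atTop,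
      (2/125 + Sq ℓ / ℓ : ℝ) =
      var K4MinusEdge (fun ω : NBWalk K4MinusEdge ℓ => bits K4MinusEdge ω) / (ℓ : ℝ) := by
    filter_upwards [eventually_ge_atTop 1] with ℓ hℓ
    have hn : ((ℓ:ℝ)) ≠ 0 := Nat.cast_ne_zero.2 (by omega)
    rw [var_bits]
    field_simp
    try ring
  have h2 : Tendsto (fun ℓ : ℕ => (2/125 + Sq ℓ / ℓ : ℝ)) atTop (nhds (2/125 + 0)) :=
    tendsto_const_nhds.add key
  rw [add_zero] at h2
  exact Tendsto.congr' heq h2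

end NB
end
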